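/- Let X and Y be real Hilbert spaces, A, V : X → Y bounded linear operators, G : X → ℝ a γ_G-strongly convex lower semicontinuous function and F* : Y → ℝ a γ_{F*}-strongly convex lower semicontinuous function, with γ_G · γ_{F*} > (1/4)·‖A − V‖². Then there exist x̂ ∈ X, ŷ ∈ Y, g ∈ X and f ∈ Y such that g is a subgradient of G at x̂, f is a subgradient of F* at ŷ, g + V*(ŷ) = 0, and f = A(x̂). -/

import Mathlib

open scoped RealInnerProductSpace

/-- `g` is a subgradient of `f` at `x`. -/
def IsSubgradientAt {E : Type*} [NormedAddCommGroup E] [InnerProductSpace ℝ E]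
    (f : E → ℝ) (g x : E) : Prop :=
  ∀ z, f x + ⟪g, z - x⟫ ≤ f z

/-- `f` is `γ`-strongly convex: `x ↦ f x − (γ/2)‖x‖²` is convex. -/
def IsStronglyConvex {E : Type*} [NormedAddCommGroup E] [InnerProductSpace ℝ E]
    (γ : ℝ) (f : E → ℝ) : Prop :=
  0 < γ ∧ ConvexOn ℝ Set.univ (fun x => f x - γ / 2 * ‖x‖ ^ 2)

/-!
Split the mismatched adjoint as `V = A + (V - A)`. For a fixed perturbation `b`, the matched
problem `-(b + A† y) ∈ ∂G x`, `A x ∈ ∂F* y` is solved by minimising the strongly convex, lower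
semicontinuous function `x ↦ G x + ⟪b, x⟫ + F** (A x)`, where the conjugate `F**` of the strongly
convex `F*` is smooth with gradient the maximiser `y`. Adding the strong monotonicity
inequalities of `∂G` and `∂F*` at two such saddle points cancels the coupling through `A`, so the
dual part depends on `b` with Lipschitz constant `1 / (2 √(γ_G γ_{F*}))`. Hence
`y ↦ y ((V - A)† y)` is a contraction precisely when `‖A - V‖² < 4 γ_G γ_{F*}`, and its fixed
point solves the mismatched inclusion.
-/

open Set Filter Topology
open scoped InnerProduct

def IsStrongSubgradientAt {E : Type*} [NormedAddCommGroup E] [InnerProductSpace ℝ E]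
    (m : ℝ) (f : E → ℝ) (g x : E) : Prop :=
  ∀ z, f x + ⟪g, z - x⟫ + m / 2 * ‖z - x‖ ^ 2 ≤ f z

section StrongConvexity

variable {E : Type*} [NormedAddCommGroup E] [InnerProductSpace ℝ E] {m : ℝ} {f : E → ℝ}

theorem IsStrongSubgradientAt.isSubgradientAt {g x : E} (h : IsStrongSubgradientAt m f g x)
    (hm : 0 ≤ m) : IsSubgradientAt f g x :=
  fun z => (le_add_of_nonneg_right (by positivity)).trans (h z)

theorem IsStrongSubgradientAt.mul_norm_sub_sq_le_inner {g₁ g₂ x₁ x₂ : E}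
    (h₁ : IsStrongSubgradientAt m f g₁ x₁) (h₂ : IsStrongSubgradientAt m f g₂ x₂) :
    m * ‖x₁ - x₂‖ ^ 2 ≤ ⟪g₁ - g₂, x₁ - x₂⟫ := by
  have h₁₂ := h₁ x₂
  have h₂₁ := h₂ x₁
  rw [norm_sub_rev] at h₁₂
  have hinner : ⟪g₁, x₂ - x₁⟫ + ⟪g₂, x₁ - x₂⟫ = -⟪g₁ - g₂, x₁ - x₂⟫ := by
    simp only [inner_sub_left, inner_sub_right]; ring
  linarith

theorem StrongConvexOn.isStrongSubgradientAt_of_le_add_sq (hf : StrongConvexOn univ m f)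
    {g x : E} {c : ℝ} (h : ∀ z, f x + ⟪g, z - x⟫ ≤ f z + c * ‖z - x‖ ^ 2) :
    IsStrongSubgradientAt m f g x := by
  intro z
  set d := ‖z - x‖ ^ 2
  have hsmall : ∀ t ∈ Ioc (0 : ℝ) 1,
      f x + ⟪g, z - x⟫ + m / 2 * d - f z ≤ t * ((m / 2 + c) * d) := by
    rintro t ⟨ht₀, ht₁⟩
    have hseg : (1 - t) • x + t • z - x = t • (z - x) := by module
    have hconv := hf.2 (mem_univ x) (mem_univ z) (sub_nonneg.2 ht₁) ht₀.le (sub_add_cancel 1 t)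
    have hsub := h ((1 - t) • x + t • z)
    rw [hseg, inner_smul_right, norm_smul, Real.norm_of_nonneg ht₀.le, mul_pow] at hsub
    rw [norm_sub_rev] at hconv
    simp only [smul_eq_mul] at hconv
    nlinarith
  have hlim : Tendsto (fun t : ℝ => t * ((m / 2 + c) * d)) (𝓝[>] 0) (𝓝 0) := by
    simpa using (tendsto_id.mul_const ((m / 2 + c) * d)).mono_left (nhdsWithin_le_nhds (a := 0))
  linarith [ge_of_tendsto hlim (eventually_of_mem (Ioc_mem_nhdsGT one_pos) hsmall)]

theorem StrongConvexOn.bddBelow_range (hf : StrongConvexOn univ m f) (hm : 0 < m)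
    (hlsc : LowerSemicontinuous f) : BddBelow (range f) := by
  have hlsc' : LowerSemicontinuousOn (fun x => f x - m / 2 * ‖x‖ ^ 2) univ := by
    refine lowerSemicontinuousOn_univ_iff.2 ?_
    simpa only [sub_eq_add_neg] using
      hlsc.add (by fun_prop : Continuous fun x : E => -(m / 2 * ‖x‖ ^ 2)).lowerSemicontinuous
  obtain ⟨l, c, hlc, -⟩ := (strongConvexOn_iff_convex.1 hf).exists_affine_le_of_lt (𝕜 := ℝ)
    (mem_univ 0) (sub_one_lt _) isClosed_univ hlsc'
  refine ⟨c - ‖l‖ ^ 2 / (2 * m), ?_⟩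
  rintro _ ⟨x, rfl⟩
  have hx : l x + c ≤ f x - m / 2 * ‖x‖ ^ 2 := by simpa using hlc ⟨x, mem_univ x⟩
  have hl : -(‖l‖ * ‖x‖) ≤ l x := neg_le_of_abs_le (l.le_opNorm x)
  have hquad : m / 2 * ‖x‖ ^ 2 - ‖l‖ * ‖x‖ + ‖l‖ ^ 2 / (2 * m)
      = (m * ‖x‖ - ‖l‖) ^ 2 / (2 * m) := by
    field_simp; ring
  have : 0 ≤ (m * ‖x‖ - ‖l‖) ^ 2 / (2 * m) := by positivity
  linarith

theorem StrongConvexOn.exists_forall_le [CompleteSpace E] (hf : StrongConvexOn univ m f)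
    (hm : 0 < m) (hlsc : LowerSemicontinuous f) : ∃ x, ∀ z, f x ≤ f z := by
  have hbdd := hf.bddBelow_range hm hlsc
  set μ := ⨅ z, f z
  choose u hu using fun n : ℕ =>
    exists_lt_of_ciInf_lt (lt_add_of_pos_right μ (Nat.one_div_pos_of_nat (n := n)))
  -- strong convexity at the midpoint: `m/8 ‖u n - u k‖² ≤ (f (u n) + f (u k))/2 - μ`
  have hdist : ∀ n k N : ℕ, N ≤ n → N ≤ k → dist (u n) (u k) ≤ √(8 / m * (1 / (N + 1))) := by
    intro n k N hn hk
    have hmid := hf.2 (mem_univ (u n)) (mem_univ (u k)) (by norm_num : (0 : ℝ) ≤ 1 / 2)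
      (by norm_num : (0 : ℝ) ≤ 1 / 2) (by norm_num)
    have hμ := ciInf_le hbdd ((1 / 2 : ℝ) • u n + (1 / 2 : ℝ) • u k)
    have hn' : 1 / ((n : ℝ) + 1) ≤ 1 / (N + 1) := by gcongr
    have hk' : 1 / ((k : ℝ) + 1) ≤ 1 / (N + 1) := by gcongr
    rw [dist_eq_norm, ← abs_norm]
    refine Real.abs_le_sqrt ?_
    rw [div_mul_eq_mul_div, le_div_iff₀ hm]
    simp only [smul_eq_mul] at hmid
    nlinarith [hu n, hu k]
  have hb : Tendsto (fun N : ℕ => √(8 / m * (1 / (N + 1)))) atTop (𝓝 0) := by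
    simpa using (tendsto_one_div_add_atTop_nhds_zero_nat.const_mul (8 / m)).sqrt
  obtain ⟨x, hx⟩ := cauchySeq_tendsto_of_complete (cauchySeq_of_le_tendsto_0 _ hdist hb)
  have hfx : ∀ N : ℕ, f x ≤ μ + 1 / (N + 1) := fun N =>
    (hlsc.isClosed_preimage _).mem_of_tendsto hx <| (eventually_ge_atTop N).mono fun n hn =>
      (hu n).le.trans (by gcongr)
  refine ⟨x, fun z => ?_⟩
  have hμ : f x ≤ μ := ge_of_tendsto' (by simpa using
    tendsto_one_div_add_atTop_nhds_zero_nat.const_add μ) hfx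
  exact hμ.trans (ciInf_le hbdd z)

theorem StrongConvexOn.exists_isStrongSubgradientAt [CompleteSpace E]
    (hf : StrongConvexOn univ m f) (hm : 0 < m) (hlsc : LowerSemicontinuous f) (g : E) :
    ∃ x, IsStrongSubgradientAt m f g x := by
  have hf' : StrongConvexOn univ m fun z => f z - ⟪g, z⟫ := by
    have h := hf.sub ((innerₛₗ ℝ g).concaveOn convex_univ).uniformConcaveOn_zero
    rw [add_zero] at h
    exact h
  have hlsc' : LowerSemicontinuous fun z => f z - ⟪g, z⟫ := by
    simpa only [sub_eq_add_neg] using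
      hlsc.add (by fun_prop : Continuous fun z => -⟪g, z⟫).lowerSemicontinuous
  obtain ⟨x, hx⟩ := hf'.exists_forall_le hm hlsc'
  refine ⟨x, hf.isStrongSubgradientAt_of_le_add_sq (c := 0) fun z => ?_⟩
  have := hx z
  rw [inner_sub_right]
  linarith

end StrongConvexity

section Conjugate

variable {Y : Type*} [NormedAddCommGroup Y] [InnerProductSpace ℝ Y]
  {n : ℝ} {F : Y → ℝ} {y : Y → Y}

/-- The Fenchel conjugate `F* w = sup_z (⟪w, z⟫ - F z)`, evaluated at a maximiser `y w`,
i.e. a point with `w ∈ ∂F (y w)`. -/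
def conjugateAt (F : Y → ℝ) (y : Y → Y) (w : Y) : ℝ := ⟪w, y w⟫ - F (y w)

theorem inner_sub_le_conjugateAt (hy : ∀ w, IsStrongSubgradientAt n F w (y w)) (hn : 0 ≤ n)
    (w z : Y) : ⟪w, z⟫ - F z ≤ conjugateAt F y w := by
  have := (hy w).isSubgradientAt hn z
  rw [inner_sub_right] at this
  unfold conjugateAt
  linarith

theorem conjugateAt_le_add (hy : ∀ w, IsStrongSubgradientAt n F w (y w)) (hn : 0 < n)
    (w w' : Y) :
    conjugateAt F y w' ≤ conjugateAt F y w + ⟪w' - w, y w⟫ + ‖w' - w‖ ^ 2 / (2 * n) := by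
  have hstrong := hy w (y w')
  have hcs := real_inner_le_norm (w' - w) (y w' - y w)
  have hamgm : ‖w' - w‖ * ‖y w' - y w‖ ≤ n / 2 * ‖y w' - y w‖ ^ 2 + ‖w' - w‖ ^ 2 / (2 * n) := by
    have : n / 2 * ‖y w' - y w‖ ^ 2 + ‖w' - w‖ ^ 2 / (2 * n) - ‖w' - w‖ * ‖y w' - y w‖
        = (n * ‖y w' - y w‖ - ‖w' - w‖) ^ 2 / (2 * n) := by
      field_simp; ring
    have : 0 ≤ (n * ‖y w' - y w‖ - ‖w' - w‖) ^ 2 / (2 * n) := by positivity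
    linarith
  have hsplit : ⟪w', y w'⟫ = ⟪w, y w⟫ + ⟪w, y w' - y w⟫ + ⟪w' - w, y w⟫ + ⟪w' - w, y w' - y w⟫ := by
    simp only [inner_sub_left, inner_sub_right]; ring
  unfold conjugateAt
  linarith

theorem convexOn_conjugateAt (hy : ∀ w, IsStrongSubgradientAt n F w (y w)) (hn : 0 ≤ n) :
    ConvexOn ℝ univ (conjugateAt F y) := by
  refine ⟨convex_univ, fun w₁ _ w₂ _ a b ha hb hab => ?_⟩
  set z := y (a • w₁ + b • w₂)
  have h₁ := inner_sub_le_conjugateAt hy hn w₁ z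
  have h₂ := inner_sub_le_conjugateAt hy hn w₂ z
  have hval : conjugateAt F y (a • w₁ + b • w₂) = a * (⟪w₁, z⟫ - F z) + b * (⟪w₂, z⟫ - F z) := by
    rw [conjugateAt, inner_add_left, real_inner_smul_left, real_inner_smul_left]
    linear_combination (F z) * hab
  rw [hval, smul_eq_mul, smul_eq_mul]
  gcongr

theorem lowerSemicontinuous_conjugateAt (hy : ∀ w, IsStrongSubgradientAt n F w (y w))
    (hn : 0 ≤ n) : LowerSemicontinuous (conjugateAt F y) :=
  fun w₀ _ hc => (((continuous_id.inner continuous_const).sub continuous_const).tendsto w₀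
    |>.eventually (lt_mem_nhds hc)).mono fun w hw =>
      hw.trans_le (inner_sub_le_conjugateAt hy hn w (y w₀))

end Conjugate

section Saddle

variable {X Y : Type*} [NormedAddCommGroup X] [InnerProductSpace ℝ X] [CompleteSpace X]
  [NormedAddCommGroup Y] [InnerProductSpace ℝ Y] [CompleteSpace Y]
  {m n : ℝ} {G : X → ℝ} {F : Y → ℝ}

theorem StrongConvexOn.exists_saddle_point (hG : StrongConvexOn univ m G) (hm : 0 < m)
    (hGlsc : LowerSemicontinuous G) (hF : StrongConvexOn univ n F) (hn : 0 < n)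
    (hFlsc : LowerSemicontinuous F) (A : X →L[ℝ] Y) (b : X) :
    ∃ x y, IsStrongSubgradientAt m G (-(b + (A†) y)) x ∧ IsStrongSubgradientAt n F (A x) y := by
  choose y hy using hF.exists_isStrongSubgradientAt hn hFlsc
  set Φ : X → ℝ := fun x => G x + ⟪b, x⟫ + conjugateAt F y (A x)
  have hΦ : StrongConvexOn univ m Φ := by
    have h := (hG.add ((innerₛₗ ℝ b).convexOn convex_univ).uniformConvexOn_zero).add
      ((convexOn_conjugateAt hy hn.le).comp_linearMap A.toLinearMap).uniformConvexOn_zero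
    rw [add_zero, add_zero] at h
    exact h
  have hΦlsc : LowerSemicontinuous Φ :=
    (hGlsc.add (by fun_prop : Continuous fun x => ⟪b, x⟫).lowerSemicontinuous).add
      ((lowerSemicontinuous_conjugateAt hy hn.le).comp A.continuous)
  obtain ⟨x, hx⟩ := hΦ.exists_forall_le hm hΦlsc
  refine ⟨x, y (A x), hG.isStrongSubgradientAt_of_le_add_sq (c := ‖A‖ ^ 2 / (2 * n)) fun z => ?_,
    hy (A x)⟩
  -- `conjugateAt F y` is `1/n`-smooth, so `Φ z - Φ x` is at most the change of
  -- `G + ⟪b + A† y, ·⟫` plus a quadratic term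
  have hsmooth := conjugateAt_le_add hy hn (A x) (A z)
  have hAz : ‖A z - A x‖ ^ 2 ≤ ‖A‖ ^ 2 * ‖z - x‖ ^ 2 := by
    rw [← map_sub, ← mul_pow]
    exact pow_le_pow_left₀ (norm_nonneg _) (A.le_opNorm _) 2
  have hinner : ⟪-(b + (A†) (y (A x))), z - x⟫ = ⟪b, x⟫ - ⟪b, z⟫ - ⟪A z - A x, y (A x)⟫ := by
    rw [inner_neg_left, inner_add_left, ContinuousLinearMap.adjoint_inner_left, ← map_sub,
      real_inner_comm (A (z - x)), inner_sub_right]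
    ring
  have := hx z
  rw [hinner]
  have : ‖A z - A x‖ ^ 2 / (2 * n) ≤ ‖A‖ ^ 2 / (2 * n) * ‖z - x‖ ^ 2 := by
    rw [div_mul_eq_mul_div]; gcongr
  linarith

theorem two_mul_sqrt_mul_norm_sub_le (hm : 0 ≤ m) (hn : 0 ≤ n) (A : X →L[ℝ] Y)
    {b₁ b₂ x₁ x₂ : X} {y₁ y₂ : Y}
    (hx₁ : IsStrongSubgradientAt m G (-(b₁ + (A†) y₁)) x₁)
    (hy₁ : IsStrongSubgradientAt n F (A x₁) y₁)
    (hx₂ : IsStrongSubgradientAt m G (-(b₂ + (A†) y₂)) x₂)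
    (hy₂ : IsStrongSubgradientAt n F (A x₂) y₂) :
    2 * √(m * n) * ‖y₁ - y₂‖ ≤ ‖b₁ - b₂‖ := by
  have hX := hx₁.mul_norm_sub_sq_le_inner hx₂
  have hY := hy₁.mul_norm_sub_sq_le_inner hy₂
  have hcoupling : ⟪-(b₁ + (A†) y₁) - -(b₂ + (A†) y₂), x₁ - x₂⟫
      = -⟪b₁ - b₂, x₁ - x₂⟫ - ⟪A x₁ - A x₂, y₁ - y₂⟫ := by
    rw [← map_sub, ← ContinuousLinearMap.adjoint_inner_right, real_inner_comm ((A†) _)]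
    simp only [map_sub, inner_sub_left, inner_sub_right, inner_neg_left, inner_add_left]
    ring
  rw [hcoupling] at hX
  have hcs := neg_le_of_abs_le (abs_real_inner_le_norm (b₁ - b₂) (x₁ - x₂))
  have hsum : m * ‖x₁ - x₂‖ ^ 2 + n * ‖y₁ - y₂‖ ^ 2 ≤ ‖b₁ - b₂‖ * ‖x₁ - x₂‖ := by linarith
  have hsq : (2 * √(m * n) * ‖y₁ - y₂‖) ^ 2 ≤ ‖b₁ - b₂‖ ^ 2 := by
    rw [mul_pow, mul_pow, Real.sq_sqrt (mul_nonneg hm hn)]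
    nlinarith [mul_le_mul_of_nonneg_left hsum hm, sq_nonneg (‖b₁ - b₂‖ - 2 * m * ‖x₁ - x₂‖)]
  exact pow_le_pow_iff_left₀ (by positivity) (norm_nonneg _) two_ne_zero |>.1 hsq

end Saddle

theorem pddr_mismatch_fixed_point_exists
    {X Y : Type*} [NormedAddCommGroup X] [InnerProductSpace ℝ X] [CompleteSpace X]
    [NormedAddCommGroup Y] [InnerProductSpace ℝ Y] [CompleteSpace Y]
    (A V : X →L[ℝ] Y) (G : X → ℝ) (Fs : Y → ℝ) (γG γFs : ℝ)
    (hG : IsStronglyConvex γG G) (hFs : IsStronglyConvex γFs Fs)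
    (hGlsc : LowerSemicontinuous G) (hFslsc : LowerSemicontinuous Fs)
    (hcond : (1 / 4) * ‖A - V‖ ^ 2 < γG * γFs) :
    ∃ (xh : X) (yh : Y) (g : X) (f : Y),
      IsSubgradientAt G g xh ∧ IsSubgradientAt Fs f yh ∧
      g + (ContinuousLinearMap.adjoint V) yh = 0 ∧ f = A xh := by
  choose x y hx hy using (strongConvexOn_iff_convex.2 hG.2).exists_saddle_point hG.1 hGlsc
    (strongConvexOn_iff_convex.2 hFs.2) hFs.1 hFslsc A
  set T : Y → Y := fun v => y (((V - A)†) v)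
  set k := ‖A - V‖ / (2 * √(γG * γFs))
  have hsqrt : 0 < √(γG * γFs) := Real.sqrt_pos.2 (mul_pos hG.1 hFs.1)
  have hk : k < 1 := by
    rw [div_lt_one (by positivity), ← div_lt_iff₀' two_pos, Real.lt_sqrt (by positivity)]
    linarith [show (‖A - V‖ / 2) ^ 2 = 1 / 4 * ‖A - V‖ ^ 2 by ring]
  have hT : ContractingWith k.toNNReal T := by
    refine ⟨Real.toNNReal_lt_one.2 hk, LipschitzWith.of_dist_le' fun u v => ?_⟩
    have hyuv := two_mul_sqrt_mul_norm_sub_le hG.1.le hFs.1.le A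
      (hx (((V - A)†) u)) (hy _) (hx (((V - A)†) v)) (hy _)
    have hadj : ‖((V - A)†) u - ((V - A)†) v‖ ≤ ‖A - V‖ * ‖u - v‖ := by
      rw [← map_sub, norm_sub_rev A V, ← LinearIsometryEquiv.norm_map ContinuousLinearMap.adjoint]
      exact ((V - A)†).le_opNorm _
    rw [dist_eq_norm, dist_eq_norm, div_mul_eq_mul_div, le_div_iff₀ (by positivity)]
    linarith
  obtain ⟨v, hv, -⟩ := hT.exists_fixedPoint 0 (edist_ne_top _ _)
  have hv : y (((V - A)†) v) = v := hv
  have hVA : ((V - A)†) v + (A†) v = (V†) v := by simp [map_sub]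
  refine ⟨x (((V - A)†) v), v, -((V†) v), A (x (((V - A)†) v)), ?_, ?_, neg_add_cancel _, rfl⟩
  · simpa only [hv, hVA] using (hx (((V - A)†) v)).isSubgradientAt hG.1.le
  · simpa only [hv] using (hy (((V - A)†) v)).isSubgradientAt hFs.1.le
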